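/- Let n, L, m be integers with m + 2 ≤ L ≤ n, and let θ ∈ Θ_L. Then, with all indices taken modulo n, Σ_{i=1}^{n} θ_i·θ_{i+m+1} − Σ_{i=1}^{n} θ_i·θ_{i+m+2} = W(θ)/2. -/
import Mathlib


open Finset

/-- `Θ_L`: the set of piecewise-constant vectors in `ℝⁿ` all of whose constant
segments have length at least `L`. -/
def ThetaSet (n L : ℕ) : Set (Fin n → ℝ) :=
  {θ | ∃ (k : ℕ) (t : ℕ → ℕ) (c : ℕ → ℝ),
    0 < k ∧ t 0 = 0 ∧ t k = n ∧
    (∀ j < k, t j + L ≤ t (j + 1)) ∧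
    (∀ j < k, ∀ i : Fin n, t j ≤ i.val → i.val < t (j + 1) → θ i = c j)}

/-- Circular lag-`h` product sum `S_h(x) = ∑_{i=1}^n x_i·x_{i+h}`, indices modulo `n`. -/
def Scirc (n h : ℕ) (x : Fin n → ℝ) : ℝ :=
  ∑ i : Fin n, x i * x ⟨(i.val + h) % n, Nat.mod_lt _ i.pos⟩

/-- Circular lag-`h` squared-difference sum, indices modulo `n`.
`W(θ) = Tcirc n 1 θ`. -/
def Tcirc (n h : ℕ) (x : Fin n → ℝ) : ℝ :=
  ∑ i : Fin n, (x i - x ⟨(i.val + h) % n, Nat.mod_lt _ i.pos⟩) ^ 2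

/-- Auxiliary: the circular shift of an index by `h`. -/
def nxt (n : ℕ) (i : Fin n) (h : ℕ) : Fin n := ⟨(i.val + h) % n, Nat.mod_lt _ i.pos⟩

lemma Scirc_eq (n h : ℕ) (x : Fin n → ℝ) : Scirc n h x = ∑ i : Fin n, x i * x (nxt n i h) := rfl

lemma Tcirc_eq (n h : ℕ) (x : Fin n → ℝ) :
    Tcirc n h x = ∑ i : Fin n, (x i - x (nxt n i h)) ^ 2 := rfl

lemma nxt_val (n : ℕ) (i : Fin n) (h : ℕ) : (nxt n i h).val = (i.val + h) % n := rfl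

lemma nxt_eq_add (n : ℕ) (hn : 0 < n) (i : Fin n) (h : ℕ) :
    haveI : NeZero n := ⟨hn.ne'⟩
    nxt n i h = i + ⟨h % n, Nat.mod_lt _ hn⟩ := by
  haveI : NeZero n := ⟨hn.ne'⟩
  apply Fin.ext
  show (i.val + h) % n = (i.val + h % n) % n
  rw [Nat.add_mod_mod]

lemma nxt_nxt (n : ℕ) (i : Fin n) (a b : ℕ) : nxt n (nxt n i a) b = nxt n i (a + b) := by
  apply Fin.ext
  show ((i.val + a) % n + b) % n = (i.val + (a + b)) % n
  rw [Nat.mod_add_mod, Nat.add_assoc]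

/-- For `m + 2 ≤ L ≤ n` and `θ ∈ Θ_L`,
`∑ θ_i θ_{i+m+1} − ∑ θ_i θ_{i+m+2} = W(θ)/2` with indices modulo `n`. -/
theorem stmt_8
    (n L m : ℕ) (hmL : m + 2 ≤ L) (hLn : L ≤ n)
    (θ : Fin n → ℝ) (hθ : θ ∈ ThetaSet n L) :
    Scirc n (m + 1) θ - Scirc n (m + 2) θ = Tcirc n 1 θ / 2 := by
  classical
  obtain ⟨k, t, c, hk, ht0, htk, hgap, hval⟩ := hθ
  have hn : 0 < n := by omega
  haveI : NeZero n := ⟨hn.ne'⟩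
  -- Every position lies in a well-defined segment.
  have seg : ∀ p, p < n → ∃ j, j < k ∧ t j ≤ p ∧ p < t (j + 1) := by
    intro p hp
    set j := Nat.findGreatest (fun j => t j ≤ p) (k - 1) with hj
    have hj0 : t j ≤ p :=
      Nat.findGreatest_spec (P := fun j => t j ≤ p) (Nat.zero_le _) (by simp [ht0])
    have hjk : j ≤ k - 1 := Nat.findGreatest_le _
    refine ⟨j, by omega, hj0, ?_⟩
    by_cases hcase : j = k - 1
    · have hjn : t (j + 1) = n := by rw [show j + 1 = k by omega]; exact htk
      omega
    · have hng : ¬ t (j + 1) ≤ p :=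
        Nat.findGreatest_is_greatest (P := fun j => t j ≤ p) (n := k - 1) (k := j + 1) (by omega) (by omega)
      omega
  -- Pointwise key identity.
  have key : ∀ i : Fin n,
      θ i * (θ (nxt n i (m + 1)) - θ (nxt n (nxt n i (m + 1)) 1)) =
      θ (nxt n i (m + 1)) * (θ (nxt n i (m + 1)) - θ (nxt n (nxt n i (m + 1)) 1)) := by
    intro i
    set a := nxt n i (m + 1) with ha
    by_cases heq : θ a = θ (nxt n a 1)
    · rw [heq]; ring
    · have h2 : (i.val + (m + 1)) % n = a.val := rfl
      have hia : m + 1 ≤ a.val → i.val = a.val - (m + 1) := by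
        intro hge
        have hi := i.isLt
        have hav := a.isLt
        rcases Nat.lt_or_ge (i.val + (m + 1)) n with hlt | hge2
        · rw [Nat.mod_eq_of_lt hlt] at h2; omega
        · rw [Nat.mod_eq_sub_mod hge2, Nat.mod_eq_of_lt (by omega)] at h2
          omega
      have hi_eq : θ i = θ a := by
        by_cases hend : a.val + 1 = n
        · -- segment k-1
          have h1 : t (k - 1) + L ≤ t k := by
            have := hgap (k - 1) (by omega)
            rwa [show k - 1 + 1 = k by omega] at this
          have hge : m + 1 ≤ a.val := by omega
          have hiv : i.val = a.val - (m + 1) := hia hge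
          have hθa : θ a = c (k - 1) := by
            refine hval (k - 1) (by omega) a (by omega) ?_
            rw [show k - 1 + 1 = k by omega, htk]; omega
          have hθi : θ i = c (k - 1) := by
            refine hval (k - 1) (by omega) i (by omega) ?_
            rw [show k - 1 + 1 = k by omega, htk]; omega
          rw [hθi, hθa]
        · obtain ⟨j, hjk', htj, htj1⟩ := seg a.val a.isLt
          have hbv : (nxt n a 1).val = a.val + 1 := by
            show (a.val + 1) % n = a.val + 1
            exact Nat.mod_eq_of_lt (by omega)
          have hθa : θ a = c j := hval j hjk' a htj htj1
          have ht1 : t (j + 1) = a.val + 1 := by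
            by_contra hne
            have hb2 : a.val + 1 < t (j + 1) := by omega
            have : θ (nxt n a 1) = c j := hval j hjk' (nxt n a 1) (by omega) (by omega)
            exact heq (by rw [hθa, this])
          have hgap' := hgap j hjk'
          have hge : m + 1 ≤ a.val := by omega
          have hiv : i.val = a.val - (m + 1) := hia hge
          have hθi : θ i = c j := hval j hjk' i (by omega) (by omega)
          rw [hθi, hθa]
      rw [hi_eq]
  -- Step 1: express the LHS as a sum of per-index products.
  have e1 : Scirc n (m + 1) θ - Scirc n (m + 2) θ =
      ∑ i : Fin n, θ (nxt n i (m + 1)) * (θ (nxt n i (m + 1)) - θ (nxt n (nxt n i (m + 1)) 1)) := by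
    rw [Scirc_eq, Scirc_eq, ← Finset.sum_sub_distrib]
    refine Finset.sum_congr rfl fun i _ => ?_
    calc θ i * θ (nxt n i (m + 1)) - θ i * θ (nxt n i (m + 2))
        = θ i * (θ (nxt n i (m + 1)) - θ (nxt n (nxt n i (m + 1)) 1)) := by
          rw [nxt_nxt]; ring
      _ = θ (nxt n i (m + 1)) * (θ (nxt n i (m + 1)) - θ (nxt n (nxt n i (m + 1)) 1)) := key i
  -- Step 2: reindex by the circular shift.
  have e2 : ∑ i : Fin n,
        θ (nxt n i (m + 1)) * (θ (nxt n i (m + 1)) - θ (nxt n (nxt n i (m + 1)) 1)) =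
      ∑ i : Fin n, θ i * (θ i - θ (nxt n i 1)) := by
    have := Equiv.sum_comp (Equiv.addRight (⟨(m + 1) % n, Nat.mod_lt _ hn⟩ : Fin n))
      (fun i : Fin n => θ i * (θ i - θ (nxt n i 1)))
    rw [← this]
    refine Finset.sum_congr rfl fun i _ => ?_
    simp only [Equiv.coe_addRight]
    rw [← nxt_eq_add n hn i (m + 1)]
  -- Step 3: reindex the squared sum by shift one.
  have hsq : ∑ i : Fin n, θ (nxt n i 1) ^ 2 = ∑ i : Fin n, θ i ^ 2 := by
    have := Equiv.sum_comp (Equiv.addRight (⟨1 % n, Nat.mod_lt _ hn⟩ : Fin n))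
      (fun i : Fin n => θ i ^ 2)
    rw [← this]
    refine Finset.sum_congr rfl fun i _ => ?_
    simp only [Equiv.coe_addRight]
    rw [← nxt_eq_add n hn i 1]
  have expand : Tcirc n 1 θ =
      ∑ i : Fin n, θ i ^ 2 - 2 * ∑ i : Fin n, θ i * θ (nxt n i 1) +
        ∑ i : Fin n, θ (nxt n i 1) ^ 2 := by
    rw [Tcirc_eq,
      Finset.sum_congr rfl fun (i : Fin n) _ =>
        (by ring : (θ i - θ (nxt n i 1)) ^ 2 =
          θ i ^ 2 - 2 * (θ i * θ (nxt n i 1)) + θ (nxt n i 1) ^ 2),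
      Finset.sum_add_distrib, Finset.sum_sub_distrib, ← Finset.mul_sum]
  have hL : ∑ i : Fin n, θ i * (θ i - θ (nxt n i 1)) =
      ∑ i : Fin n, θ i ^ 2 - ∑ i : Fin n, θ i * θ (nxt n i 1) := by
    rw [← Finset.sum_sub_distrib]
    exact Finset.sum_congr rfl fun i _ => by ring
  rw [e1, e2, hL, expand, hsq]
  ring
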